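/- arXiv:2508.07951 — 5 statements merged into one kernel-verified Lean document; each statement's English description precedes it below -/
import Mathlib

section
/- Let a₁/q₁ < a₂/q₂ with 0 < aᵢ < qᵢ and a₂q₁ - a₁q₂ = 1, and define h(a/q) = q + a + ā as above. Then h(a₂/q₂) = q₁ + (2 - ⌊q₁/q₂⌋)·q₂ - (q₂·q̄₂ - 1)/q₁, where q̄₂ ∈ [1,q₁) is the inverse of q₂ mod q₁. -/
/-- With `0 < aᵢ < qᵢ`, `a₂q₁ - a₁q₂ = 1`, `ā₂ ∈ [1,q₂)` the inverse of
`a₂` mod `q₂` and `q̄₂ ∈ [1,q₁)` the inverse of `q₂` mod `q₁`, the height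
`h(a₂/q₂) = q₂ + a₂ + ā₂` satisfies
`h(a₂/q₂) = q₁ + (2 - ⌊q₁/q₂⌋)·q₂ - (q₂·q̄₂ - 1)/q₁`. -/
theorem height_a2_formula (a₁ a₂ q₁ q₂ abar₂ qbar₂ : ℕ)
    (ha₁ : 0 < a₁) (ha₁q : a₁ < q₁) (ha₂ : 0 < a₂) (ha₂q : a₂ < q₂)
    (hdet : a₂ * q₁ = a₁ * q₂ + 1)
    (habar1 : 1 ≤ abar₂) (habar2 : abar₂ < q₂) (habar : a₂ * abar₂ ≡ 1 [MOD q₂])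
    (hqbar1 : 1 ≤ qbar₂) (hqbar2 : qbar₂ < q₁) (hqbar : q₂ * qbar₂ ≡ 1 [MOD q₁]) :
    ((q₂ + a₂ + abar₂ : ℕ) : ℤ) =
      q₁ + (2 - ((q₁ / q₂ : ℕ) : ℤ)) * q₂ - ((q₂ : ℤ) * qbar₂ - 1) / q₁ := by
  -- (ℤ) divisibilities from the mod hypotheses
  have h1 : (q₂ : ℤ) ∣ (a₂ : ℤ) * abar₂ - 1 := by
    obtain ⟨k, hk⟩ := (Nat.modEq_iff_dvd' (by nlinarith)).mp habar.symm
    have : a₂ * abar₂ = 1 + q₂ * k := by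
      have := Nat.sub_eq_iff_eq_add (by nlinarith : (1:ℕ) ≤ a₂ * abar₂) |>.mp hk
      omega
    have hc : (a₂ : ℤ) * abar₂ = 1 + q₂ * k := by exact_mod_cast this
    exact ⟨k, by linarith⟩
  have h2 : (q₁ : ℤ) ∣ (q₂ : ℤ) * qbar₂ - 1 := by
    obtain ⟨k, hk⟩ := (Nat.modEq_iff_dvd' (by nlinarith)).mp hqbar.symm
    have : q₂ * qbar₂ = 1 + q₁ * k := by
      have := Nat.sub_eq_iff_eq_add (by nlinarith : (1:ℕ) ≤ q₂ * qbar₂) |>.mp hk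
      omega
    have hc : (q₂ : ℤ) * qbar₂ = 1 + q₁ * k := by exact_mod_cast this
    exact ⟨k, by linarith⟩
  -- coprimality
  have hcop : Nat.Coprime a₂ q₂ := by
    have d1 : Nat.gcd a₂ q₂ ∣ a₂ * q₁ := (Nat.gcd_dvd_left _ _).mul_right _
    have d2 : Nat.gcd a₂ q₂ ∣ a₁ * q₂ := (Nat.gcd_dvd_right _ _).mul_left _
    have : Nat.gcd a₂ q₂ ∣ 1 := by
      have := Nat.dvd_sub d1 d2
      rwa [hdet, Nat.add_sub_cancel_left] at this
    exact Nat.dvd_one.mp this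
  -- qbar₂ = q₁ - a₁
  have hq2q1 : Nat.Coprime q₂ q₁ := by
    have d1 : Nat.gcd q₂ q₁ ∣ a₂ * q₁ := (Nat.gcd_dvd_right _ _).mul_left _
    have d2 : Nat.gcd q₂ q₁ ∣ a₁ * q₂ := (Nat.gcd_dvd_left _ _).mul_left _
    have : Nat.gcd q₂ q₁ ∣ 1 := by
      have := Nat.dvd_sub d1 d2
      rwa [hdet, Nat.add_sub_cancel_left] at this
    exact Nat.dvd_one.mp this
  have hqbar_eq : (qbar₂ : ℤ) = (q₁ : ℤ) - a₁ := by
    have hd : (q₁ : ℤ) ∣ (q₂ : ℤ) * ((qbar₂ : ℤ) - ((q₁ : ℤ) - a₁)) := by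
      have hdet' : (a₂ : ℤ) * q₁ = (a₁ : ℤ) * q₂ + 1 := by exact_mod_cast hdet
      have : (q₂ : ℤ) * ((qbar₂ : ℤ) - ((q₁ : ℤ) - a₁)) =
          ((q₂ : ℤ) * qbar₂ - 1) + (q₁ : ℤ) * (a₂ - q₂) := by linarith [hdet']
      rw [this]
      exact dvd_add h2 ⟨_, rfl⟩
    have hcop' : IsCoprime (q₁ : ℤ) (q₂ : ℤ) :=
      Int.isCoprime_iff_gcd_eq_one.mpr (by simpa [Int.gcd] using hq2q1.symm)
    have hd2 : (q₁ : ℤ) ∣ (qbar₂ : ℤ) - ((q₁ : ℤ) - a₁) := hcop'.dvd_of_dvd_mul_left hd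
    have hb1 : (qbar₂ : ℤ) - ((q₁ : ℤ) - a₁) < q₁ := by omega
    have hb2 : -(q₁ : ℤ) < (qbar₂ : ℤ) - ((q₁ : ℤ) - a₁) := by omega
    have := Int.eq_zero_of_abs_lt_dvd hd2 (by rw [abs_lt]; exact ⟨hb2, hb1⟩)
    linarith
  -- abar₂ = q₁ % q₂, i.e. q₁ = q₂ * (q₁/q₂) + abar₂
  have habar_eq : q₁ % q₂ = abar₂ := by
    have hd : (q₂ : ℤ) ∣ (a₂ : ℤ) * ((q₁ : ℤ) - abar₂) := by
      have hdet' : (a₂ : ℤ) * q₁ = (a₁ : ℤ) * q₂ + 1 := by exact_mod_cast hdet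
      have : (a₂ : ℤ) * ((q₁ : ℤ) - abar₂) =
          (q₂ : ℤ) * a₁ - ((a₂ : ℤ) * abar₂ - 1) := by linarith [hdet']
      rw [this]
      exact dvd_sub ⟨_, rfl⟩ h1
    have hcop' : IsCoprime (q₂ : ℤ) (a₂ : ℤ) :=
      Int.isCoprime_iff_gcd_eq_one.mpr (by simpa [Int.gcd] using hcop.symm)
    have hd2 : (q₂ : ℤ) ∣ (q₁ : ℤ) - abar₂ := hcop'.dvd_of_dvd_mul_left hd
    obtain ⟨k, hk⟩ := hd2
    have hq1 : (q₁ : ℤ) = q₂ * k + abar₂ := by linarith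
    have hk0 : 0 ≤ k := by nlinarith [hq1]
    obtain ⟨m, rfl⟩ := Int.eq_ofNat_of_zero_le hk0
    have : q₁ = q₂ * m + abar₂ := by exact_mod_cast hq1
    rw [this, Nat.mul_add_mod, Nat.mod_eq_of_lt habar2]
  have hdiv : q₁ = q₂ * (q₁ / q₂) + abar₂ := by
    conv_lhs => rw [← Nat.div_add_mod q₁ q₂]
    rw [habar_eq]
  -- compute the integer division
  have hkey : ((q₂ : ℤ) * qbar₂ - 1) / q₁ = (q₂ : ℤ) - a₂ := by
    have hdet' : (a₂ : ℤ) * q₁ = (a₁ : ℤ) * q₂ + 1 := by exact_mod_cast hdet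
    have : (q₂ : ℤ) * qbar₂ - 1 = (q₁ : ℤ) * ((q₂ : ℤ) - a₂) := by
      rw [hqbar_eq]; linarith
    rw [this, Int.mul_ediv_cancel_left _ (by exact_mod_cast (by omega : q₁ ≠ 0))]
  rw [hkey]
  have : (q₁ : ℤ) = q₂ * (q₁ / q₂ : ℕ) + abar₂ := by exact_mod_cast hdiv
  push_cast
  linarith
end

section
/- Let a₁/q₁ < a₂/q₂ with 0 < aᵢ < qᵢ and a₂q₁ - a₁q₂ = 1. For the mediant a⋆/q⋆ := (a₁+a₂)/(q₁+q₂), one has h(a⋆/q⋆) = 3q₁ + q₂ + q̿₁ - q̄₂, where q̿₁ ∈ [1,q₂) is the inverse of q₁ mod q₂ and q̄₂ ∈ [1,q₁) is the inverse of q₂ mod q₁, and h(a/q) := q + a + ā with ā the inverse of a mod q in [1,q). -/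
lemma my_inv_unique (n c x y : ℕ) (hx : c * x ≡ 1 [MOD n]) (hy : c * y ≡ 1 [MOD n])
    (hxn : x < n) (hyn : y < n) : x = y := by
  have h : x ≡ y [MOD n] := by
    calc x = 1 * x := (one_mul x).symm
    _ ≡ (c * y) * x [MOD n] := (Nat.ModEq.mul_right x hy.symm)
    _ = (c * x) * y := by ring
    _ ≡ 1 * y [MOD n] := Nat.ModEq.mul_right y hx
    _ = y := one_mul y
  exact h.eq_of_lt_of_lt hxn hyn

/-- With `0 < aᵢ < qᵢ`, `a₂q₁ - a₁q₂ = 1`, the mediant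
`a⋆/q⋆ = (a₁+a₂)/(q₁+q₂)` (which is reduced) has height
`h(a⋆/q⋆) = q⋆ + a⋆ + ā⋆ = 3q₁ + q₂ + q̿₁ - q̄₂`, where `ā⋆ ∈ [1,q⋆)` is the inverse
of `a⋆` mod `q⋆`, `q̿₁ ∈ [1,q₂)` is the inverse of `q₁` mod `q₂`, and `q̄₂ ∈ [1,q₁)`
is the inverse of `q₂` mod `q₁`. -/
theorem height_mediant_formula (a₁ a₂ q₁ q₂ astar_bar qbb₁ qbar₂ : ℕ)
    (ha₁ : 0 < a₁) (ha₁q : a₁ < q₁) (ha₂ : 0 < a₂) (ha₂q : a₂ < q₂)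
    (hdet : a₂ * q₁ = a₁ * q₂ + 1)
    (hstar1 : 1 ≤ astar_bar) (hstar2 : astar_bar < q₁ + q₂)
    (hstar : (a₁ + a₂) * astar_bar ≡ 1 [MOD (q₁ + q₂)])
    (hqbb1 : 1 ≤ qbb₁) (hqbb2 : qbb₁ < q₂) (hqbb : q₁ * qbb₁ ≡ 1 [MOD q₂])
    (hqbar1 : 1 ≤ qbar₂) (hqbar2 : qbar₂ < q₁) (hqbar : q₂ * qbar₂ ≡ 1 [MOD q₁]) :
    (((q₁ + q₂) + (a₁ + a₂) + astar_bar : ℕ) : ℤ) =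
      3 * q₁ + q₂ + qbb₁ - qbar₂ := by
  -- astar_bar = q₁
  have h1 : (a₁ + a₂) * q₁ ≡ 1 [MOD (q₁ + q₂)] := by
    have h : (a₁ + a₂) * q₁ = 1 + a₁ * (q₁ + q₂) := by
      rw [add_mul, hdet]; ring
    rw [h]
    simp [Nat.ModEq, Nat.add_mul_mod_self_right]
  have e1 : astar_bar = q₁ := my_inv_unique (q₁ + q₂) (a₁ + a₂) astar_bar q₁ hstar h1
    hstar2 (by omega)
  -- qbb₁ = a₂
  have h2 : q₁ * a₂ ≡ 1 [MOD q₂] := by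
    have h : q₁ * a₂ = 1 + a₁ * q₂ := by rw [mul_comm, hdet]; ring
    rw [h]
    simp [Nat.ModEq, Nat.add_mul_mod_self_right]
  have e2 : qbb₁ = a₂ := my_inv_unique q₂ q₁ qbb₁ a₂ hqbb h2 hqbb2 ha₂q
  -- qbar₂ = q₁ - a₁
  have hz : (a₂ : ℤ) * q₁ = a₁ * q₂ + 1 := by exact_mod_cast hdet
  have h3 : q₂ * (q₁ - a₁) ≡ 1 [MOD q₁] := by
    have h : q₂ * (q₁ - a₁) = 1 + (q₂ - a₂) * q₁ := by
      zify [le_of_lt ha₁q, le_of_lt ha₂q]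
      linear_combination hz
    rw [h]
    simp [Nat.ModEq, Nat.add_mul_mod_self_right]
  have e3 : qbar₂ = q₁ - a₁ := my_inv_unique q₁ q₂ qbar₂ (q₁ - a₁) hqbar h3 hqbar2
    (by omega)
  subst e1 e2
  push_cast
  omega
end

section
/- Let a₁/q₁ < a₂/q₂ with 0 < aᵢ < qᵢ and a₂q₁ - a₁q₂ = 1, define h(a/q) = q + a + ā, and let a⋆/q⋆ = (a₁+a₂)/(q₁+q₂) be the mediant. Then h(a⋆/q⋆) > max{ h(a₁/q₁), h(a₂/q₂) }. -/
lemma inv_unique_mod {a x y n : ℕ} (hx : a * x ≡ 1 [MOD n]) (hy : a * y ≡ 1 [MOD n]) :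
    x ≡ y [MOD n] := by
  calc x = x * 1 := by ring
  _ ≡ x * (a * y) [MOD n] := hy.symm.mul_left x
  _ = y * (a * x) := by ring
  _ ≡ y * 1 [MOD n] := hx.mul_left y
  _ = y := by ring

/-- With `0 < aᵢ < qᵢ`, `a₂q₁ - a₁q₂ = 1`, the height of the mediant
`(a₁+a₂)/(q₁+q₂)` strictly exceeds the maximum of the heights of `a₁/q₁` and
`a₂/q₂`, where `h(a/q) = q + a + ā` with `ā ∈ [1,q)` the inverse of `a` mod `q`. -/
theorem height_mediant_gt (a₁ a₂ q₁ q₂ abar₁ abar₂ astar_bar : ℕ)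
    (ha₁ : 0 < a₁) (ha₁q : a₁ < q₁) (ha₂ : 0 < a₂) (ha₂q : a₂ < q₂)
    (hdet : a₂ * q₁ = a₁ * q₂ + 1)
    (habar1 : 1 ≤ abar₁) (habar1' : abar₁ < q₁) (hab₁ : a₁ * abar₁ ≡ 1 [MOD q₁])
    (habar2 : 1 ≤ abar₂) (habar2' : abar₂ < q₂) (hab₂ : a₂ * abar₂ ≡ 1 [MOD q₂])
    (hstar1 : 1 ≤ astar_bar) (hstar2 : astar_bar < q₁ + q₂)
    (hstar : (a₁ + a₂) * astar_bar ≡ 1 [MOD (q₁ + q₂)]) :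
    (q₁ + q₂) + (a₁ + a₂) + astar_bar >
      max (q₁ + a₁ + abar₁) (q₂ + a₂ + abar₂) := by
  -- (a₁+a₂)*q₁ ≡ 1 mod (q₁+q₂)
  have h1 : (a₁ + a₂) * q₁ ≡ 1 [MOD q₁ + q₂] := by
    have heq : (a₁ + a₂) * q₁ = a₁ * (q₁ + q₂) + 1 := by nlinarith [hdet]
    show ((a₁ + a₂) * q₁) % (q₁ + q₂) = 1 % (q₁ + q₂)
    rw [heq, Nat.add_comm, Nat.add_mul_mod_self_right]
  have hq : astar_bar = q₁ := by
    have h := inv_unique_mod hstar h1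
    have : astar_bar % (q₁ + q₂) = q₁ % (q₁ + q₂) := h
    rwa [Nat.mod_eq_of_lt hstar2, Nat.mod_eq_of_lt (by omega)] at this
  -- a₂*q₁ ≡ 1 mod q₂
  have h2 : a₂ * q₁ ≡ 1 [MOD q₂] := by
    show (a₂ * q₁) % q₂ = 1 % q₂
    rw [hdet, Nat.add_comm, Nat.add_mul_mod_self_right]
  have h3 : abar₂ ≤ q₁ := by
    have h := inv_unique_mod hab₂ h2
    rw [show (abar₂ ≡ q₁ [MOD q₂]) = (abar₂ % q₂ = q₁ % q₂) from rfl] at h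
    rw [Nat.mod_eq_of_lt habar2'] at h
    calc abar₂ = q₁ % q₂ := h
    _ ≤ q₁ := Nat.mod_le _ _
  rw [gt_iff_lt, max_lt_iff]
  omega
end

section
/- Two reduced fractions a₁/q₁ < a₂/q₂ with a₂q₁ - a₁q₂ = 1 are consecutive elements of 𝔖𝔉_Q (i.e., both lie in 𝔖𝔉_Q and no element of 𝔖𝔉_Q lies strictly between them) if and only if max{h(a₁/q₁), h(a₂/q₂)} ≤ Q < h((a₁+a₂)/(q₁+q₂)). -/
/-- The multiplicative inverse of `a` mod `q` lying in `[1,q)` when `q ≥ 2` and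
`gcd(a,q)=1`; by convention it is `0` when `q ≤ 1`. -/
noncomputable def modInv (a q : ℕ) : ℕ := if q ≤ 1 then 0 else ((a : ZMod q)⁻¹).val

/-- The height `h(a/q) = q + a + ā` of a rational `x = a/q` in lowest terms. -/
noncomputable def height (x : ℚ) : ℕ := x.den + x.num.toNat + modInv x.num.toNat x.den

/-- The set of `SL(2,ℕ)`-saturated Farey fractions of order `Q`. -/
noncomputable def SF (Q : ℕ) : Set ℚ := {x : ℚ | 0 < x ∧ x ≤ 1 ∧ height x ≤ Q}

lemma modInv_eq (a q t : ℕ) (hq : 2 ≤ q) (ht1 : 1 ≤ t) (htq : t < q)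
    (h : a * t % q = 1) : modInv a q = t := by
  unfold modInv
  rw [if_neg (by omega)]
  haveI : NeZero q := ⟨by omega⟩
  have hmul : (a : ZMod q) * (t : ZMod q) = 1 := by
    have : ((a * t % q : ℕ) : ZMod q) = ((a * t : ℕ) : ZMod q) := ZMod.natCast_mod _ _
    rw [h] at this
    push_cast at this
    exact this.symm
  rw [ZMod.inv_eq_of_mul_eq_one q _ _ hmul]
  exact ZMod.val_cast_of_lt htq

lemma num_den_nat (a q : ℕ) (ha : 0 < a) (hq : 0 < q) (hg : Nat.gcd a q = 1) :
    ((a : ℚ) / q).num = a ∧ ((a : ℚ) / q).den = q := by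
  have hco : Nat.Coprime (a : ℤ).natAbs (q : ℤ).natAbs := by
    simpa [Int.natAbs_natCast] using hg
  have h1 := Rat.num_div_eq_of_coprime (a := (a : ℤ)) (b := (q : ℤ)) (by exact_mod_cast hq) hco
  have h2 := Rat.den_div_eq_of_coprime (a := (a : ℤ)) (b := (q : ℤ)) (by exact_mod_cast hq) hco
  have e : ((a : ℚ) / q) = (((a : ℤ) : ℚ) / ((q : ℤ) : ℚ)) := by push_cast; ring
  rw [e]
  exact ⟨by exact_mod_cast h1, by exact_mod_cast h2⟩

lemma height_nat (a q : ℕ) (ha : 0 < a) (hq : 0 < q) (hg : Nat.gcd a q = 1) :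
    height ((a : ℚ) / q) = q + a + modInv a q := by
  obtain ⟨hn, hd⟩ := num_den_nat a q ha hq hg
  unfold height
  rw [hn, hd]
  simp

/-- Core lemma: any reduced fraction strictly between two det-1 neighbors has
height at least that of the mediant. -/
lemma core (a₁ a₂ q₁ q₂ : ℕ) (ha₁ : 0 < a₁) (ha₂ : 0 < a₂) (hq₁ : 0 < q₁) (hq₂ : 0 < q₂)
    (hdet : a₂ * q₁ = a₁ * q₂ + 1) (y : ℚ)
    (h1 : (a₁ : ℚ) / q₁ < y) (h2 : y < (a₂ : ℚ) / q₂) :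
    2 * q₁ + q₂ + a₁ + a₂ ≤ height y := by
  have hq₁' : (0 : ℚ) < q₁ := by exact_mod_cast hq₁
  have hq₂' : (0 : ℚ) < q₂ := by exact_mod_cast hq₂
  have hyden : (0 : ℚ) < (y.den : ℚ) := by exact_mod_cast y.pos
  have hy : y = (y.num : ℚ) / (y.den : ℚ) := (Rat.num_div_den y).symm
  -- y > 0
  have hypos : 0 < y := lt_trans (by positivity) h1
  have hnum_pos : 0 < y.num := Rat.num_pos.mpr hypos
  set A : ℤ := y.num with hA
  set Qd : ℤ := (y.den : ℤ) with hQd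
  -- cross multiplications
  have hm : a₁ * Qd + 1 ≤ A * q₁ := by
    rw [hy, div_lt_div_iff₀ hq₁' hyden] at h1
    have : (a₁ : ℤ) * Qd < A * q₁ := by exact_mod_cast h1
    omega
  have hn : A * q₂ + 1 ≤ a₂ * Qd := by
    rw [hy, div_lt_div_iff₀ hyden hq₂'] at h2
    have : A * q₂ < (a₂ : ℤ) * Qd := by exact_mod_cast h2
    omega
  set M : ℤ := A * q₁ - a₁ * Qd with hM
  set N : ℤ := a₂ * Qd - A * q₂ with hN
  have hM1 : 1 ≤ M := by omega
  have hN1 : 1 ≤ N := by omega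
  have hdet' : (a₂ : ℤ) * q₁ = a₁ * q₂ + 1 := by exact_mod_cast hdet
  have hAval : A = N * a₁ + M * a₂ := by
    have : N * a₁ + M * a₂ = A * (a₂ * q₁ - a₁ * q₂) := by ring
    rw [this, hdet']; ring
  have hQval : Qd = N * q₁ + M * q₂ := by
    have : N * q₁ + M * q₂ = Qd * (a₂ * q₁ - a₁ * q₂) := by ring
    rw [this, hdet']; ring
  -- natural number versions
  have hAnat : (y.num.toNat : ℤ) = A := Int.toNat_of_nonneg hnum_pos.le
  have hheight : height y = y.den + y.num.toNat + modInv y.num.toNat y.den := rfl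
  have ha₁' : (1 : ℤ) ≤ a₁ := by exact_mod_cast ha₁
  have ha₂' : (1 : ℤ) ≤ a₂ := by exact_mod_cast ha₂
  have hq₁'' : (1 : ℤ) ≤ q₁ := by exact_mod_cast hq₁
  have hq₂'' : (1 : ℤ) ≤ q₂ := by exact_mod_cast hq₂
  rcases le_or_gt 2 N with hN2 | hN2
  · -- N ≥ 2 : q + a alone suffices
    have hq_ge : 2 * (q₁ : ℤ) + q₂ ≤ Qd := by
      rw [hQval]; nlinarith
    have ha_ge : (a₁ : ℤ) + a₂ ≤ A := by
      rw [hAval]; nlinarith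
    have : 2 * q₁ + q₂ + a₁ + a₂ ≤ y.den + y.num.toNat := by
      have hd : (2 * (q₁:ℤ) + q₂) + (a₁ + a₂) ≤ Qd + A := by omega
      omega
    omega
  · -- N = 1
    have hNeq : N = 1 := by omega
    have hAeq : A = a₁ + M * a₂ := by rw [hAval, hNeq]; ring
    have hQeq : Qd = q₁ + M * q₂ := by rw [hQval, hNeq]; ring
    have hMa : (a₂ : ℤ) ≤ M * a₂ := le_mul_of_one_le_left (by omega) hM1
    have hMq : (q₂ : ℤ) ≤ M * q₂ := le_mul_of_one_le_left (by omega) hM1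
    -- q ≥ 2, since q₁ ≥ 1 and M q₂ ≥ 1
    have hQ2 : 2 ≤ y.den := by
      have : 2 ≤ Qd := by omega
      omega
    -- the inverse is q - q₂
    have hq₂lt : q₂ < y.den := by
      have : (q₂ : ℤ) < Qd := by omega
      omega
    have hAa₂ : (a₂ : ℤ) ≤ A := by omega
    have hkey : y.num.toNat * (y.den - q₂) = (y.num.toNat - a₂) * y.den + 1 := by
      have h₁ : (a₂ : ℤ) * Qd = A * q₂ + 1 := by omega
      have hA2 : a₂ ≤ y.num.toNat := by omega
      zify [hq₂lt.le, hA2]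
      rw [hAnat]
      linear_combination h₁
    have hmod : y.num.toNat * (y.den - q₂) % y.den = 1 := by
      rw [hkey, Nat.add_comm, Nat.add_mul_mod_self_right]
      exact Nat.mod_eq_of_lt (by omega)
    have hinv : modInv y.num.toNat y.den = y.den - q₂ :=
      modInv_eq _ _ _ hQ2 (by omega) (by omega) hmod
    rw [hheight, hinv]
    have hgoal : (2 * q₁ + q₂ + a₁ + a₂ : ℤ) ≤ Qd + A + (Qd - q₂) := by
      rw [hAeq, hQeq]; linarith [hMa, hMq]
    omega

lemma mediant_coprime (a₁ a₂ q₁ q₂ : ℕ) (hdet : a₂ * q₁ = a₁ * q₂ + 1) :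
    Nat.gcd (a₁ + a₂) (q₁ + q₂) = 1 := by
  have h1 : Nat.gcd (a₁ + a₂) (q₁ + q₂) ∣ (a₁ + a₂) * q₁ :=
    (Nat.gcd_dvd_left _ _).mul_right _
  have h2 : Nat.gcd (a₁ + a₂) (q₁ + q₂) ∣ a₁ * (q₁ + q₂) :=
    (Nat.gcd_dvd_right _ _).mul_left _
  have hkey : (a₁ + a₂) * q₁ = a₁ * (q₁ + q₂) + 1 := by ring_nf; omega
  have : Nat.gcd (a₁ + a₂) (q₁ + q₂) ∣ 1 := by
    have := Nat.dvd_sub h1 h2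
    rwa [hkey, Nat.add_sub_cancel_left] at this
  exact Nat.eq_one_of_dvd_one this

lemma height_mediant (a₁ a₂ q₁ q₂ : ℕ) (ha₁ : 0 < a₁) (hq₁ : 0 < q₁) (hq₂ : 0 < q₂)
    (hdet : a₂ * q₁ = a₁ * q₂ + 1) :
    height (((a₁ : ℚ) + a₂) / ((q₁ : ℚ) + q₂)) = 2 * q₁ + q₂ + a₁ + a₂ := by
  have e : ((a₁ : ℚ) + a₂) / ((q₁ : ℚ) + q₂) = ((a₁ + a₂ : ℕ) : ℚ) / ((q₁ + q₂ : ℕ) : ℚ) := by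
    push_cast; ring
  rw [e, height_nat _ _ (by omega) (by omega) (mediant_coprime a₁ a₂ q₁ q₂ hdet)]
  have hkey : (a₁ + a₂) * q₁ = a₁ * (q₁ + q₂) + 1 := by ring_nf; omega
  have hmod : (a₁ + a₂) * q₁ % (q₁ + q₂) = 1 := by
    rw [hkey, Nat.add_comm, Nat.add_mul_mod_self_right]
    exact Nat.mod_eq_of_lt (by omega)
  rw [modInv_eq _ _ _ (by omega) (by omega) (by omega) hmod]
  omega

/-- Reduced fractions `a₁/q₁ < a₂/q₂` with `a₂q₁ - a₁q₂ = 1` are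
consecutive in `𝔖𝔉_Q` (both lie in `𝔖𝔉_Q` and no element of `𝔖𝔉_Q` lies strictly
between them) iff `max{h(a₁/q₁), h(a₂/q₂)} ≤ Q < h((a₁+a₂)/(q₁+q₂))`. -/
theorem consecutive_iff_heights (Q a₁ a₂ q₁ q₂ : ℕ)
    (ha₁ : 0 < a₁) (ha₁q : a₁ ≤ q₁) (hg₁ : Nat.gcd a₁ q₁ = 1)
    (ha₂ : 0 < a₂) (ha₂q : a₂ ≤ q₂) (hg₂ : Nat.gcd a₂ q₂ = 1)
    (hdet : a₂ * q₁ = a₁ * q₂ + 1) (hQ : 3 ≤ Q) :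
    ((a₁ : ℚ) / q₁ ∈ SF Q ∧ (a₂ : ℚ) / q₂ ∈ SF Q ∧
        ∀ y ∈ SF Q, ¬((a₁ : ℚ) / q₁ < y ∧ y < (a₂ : ℚ) / q₂)) ↔
      (max (height ((a₁ : ℚ) / q₁)) (height ((a₂ : ℚ) / q₂)) ≤ Q ∧
        Q < height (((a₁ : ℚ) + a₂) / ((q₁ : ℚ) + q₂))) := by
  have hq₁ : 0 < q₁ := lt_of_lt_of_le ha₁ ha₁q
  have hq₂ : 0 < q₂ := lt_of_lt_of_le ha₂ ha₂q
  have hq₁' : (0 : ℚ) < q₁ := by exact_mod_cast hq₁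
  have hq₂' : (0 : ℚ) < q₂ := by exact_mod_cast hq₂
  have ha₁' : (0 : ℚ) < a₁ := by exact_mod_cast ha₁
  have ha₂' : (0 : ℚ) < a₂ := by exact_mod_cast ha₂
  have hdet' : (a₂ : ℚ) * q₁ = (a₁ : ℚ) * q₂ + 1 := by exact_mod_cast hdet
  have hx₁pos : (0 : ℚ) < (a₁ : ℚ) / q₁ := by positivity
  have hx₂pos : (0 : ℚ) < (a₂ : ℚ) / q₂ := by positivity
  have hx₁le : (a₁ : ℚ) / q₁ ≤ 1 := by
    rw [div_le_one hq₁']; exact_mod_cast ha₁q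
  have hx₂le : (a₂ : ℚ) / q₂ ≤ 1 := by
    rw [div_le_one hq₂']; exact_mod_cast ha₂q
  have hmed := height_mediant a₁ a₂ q₁ q₂ ha₁ hq₁ hq₂ hdet
  have hmedlt₁ : (a₁ : ℚ) / q₁ < ((a₁ : ℚ) + a₂) / ((q₁ : ℚ) + q₂) := by
    rw [div_lt_div_iff₀ hq₁' (by positivity)]
    nlinarith
  have hmedlt₂ : ((a₁ : ℚ) + a₂) / ((q₁ : ℚ) + q₂) < (a₂ : ℚ) / q₂ := by
    rw [div_lt_div_iff₀ (by positivity) hq₂']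
    nlinarith
  constructor
  · rintro ⟨m1, m2, hno⟩
    refine ⟨max_le m1.2.2 m2.2.2, ?_⟩
    by_contra hle
    push_neg at hle
    exact hno _ ⟨lt_trans hx₁pos hmedlt₁, le_trans hmedlt₂.le hx₂le, hle⟩
      ⟨hmedlt₁, hmedlt₂⟩
  · rintro ⟨hmax, hmedQ⟩
    refine ⟨⟨hx₁pos, hx₁le, le_trans (le_max_left _ _) hmax⟩,
      ⟨hx₂pos, hx₂le, le_trans (le_max_right _ _) hmax⟩, ?_⟩
    rintro y ⟨_, _, hyh⟩ ⟨hl, hr⟩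
    have := core a₁ a₂ q₁ q₂ ha₁ ha₂ hq₁ hq₂ hdet y hl hr
    omega
end

section
/- For Q ≥ 3, let γ₁ < γ₂ < ⋯ < γ_S be the elements of 𝔖𝔉_Q with denominators q₁,…,q_S, and set q₀ := 1 (denominator of 0/1) and q_{S+1} := q₁ (cyclic convention). Then the sum of indices satisfies ∑_{i=1}^{S} (q_{i−1} + q_{i+1})/q_i = 3S − 1. -/
/-!
The mediant of Farey neighbours `x < y` has the smallest height among all fractions strictly
between them, and it is taller than both `x` and `y`. Hence passing from `Q` to `Q + 1` inserts
into the chain `0 < γ₁ < ⋯ < γ_S = 1` exactly the mediants of consecutive entries that have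
height `Q + 1`, and the chain stays one of Farey neighbours. Since `q₀ = q_S = 1`, the index sum
is `∑ (qᵢ/qᵢ₊₁ + qᵢ₊₁/qᵢ)` over consecutive pairs; inserting the mediant between neighbours with
denominators `b, d` replaces `b/d + d/b` by `b/(b+d) + (b+d)/b + (b+d)/d + d/(b+d)`, which is
`b/d + d/b + 3`. For `Q = 2` the chain is `0 < 1`, with sum `2`.
-/

theorem List.exists_infix_not_and {α : Type*} {p : α → Prop} {a b : α} {l : List α}
    (ha : ¬ p a) (hb : b ∈ l) (hpb : p b) : ∃ u v, [u, v] <:+: a :: l ∧ ¬ p u ∧ p v := by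
  induction l generalizing a with
  | nil => simp at hb
  | cons c l ih =>
    by_cases hc : p c
    · exact ⟨a, c, (List.prefix_append [a, c] l).isInfix, ha, hc⟩
    · have hbl : b ∈ l := (List.mem_cons.mp hb).resolve_left (by rintro rfl; exact hc hpb)
      obtain ⟨u, v, huv, hu, hv⟩ := ih hc hbl
      exact ⟨u, v, huv.trans (List.infix_cons (List.infix_refl _)), hu, hv⟩

theorem List.Pairwise.le_or_le_of_infix {α : Type*} [Preorder α] {l : List α} {u v z : α}
    (hl : l.Pairwise (· < ·)) (huv : [u, v] <:+: l) (hz : z ∈ l) : z ≤ u ∨ v ≤ z := by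
  obtain ⟨s, t, rfl⟩ := huv
  simp only [List.pairwise_append, List.pairwise_cons, List.mem_append, List.mem_cons] at hl hz
  grind [le_of_lt, le_refl]

theorem Finset.sum_Icc_add_div_eq_sum_range {K : Type*} [DivisionRing K] (q : ℕ → K) (S : ℕ)
    (h0 : q S = q 0) (h1 : q (S + 1) = q 1) :
    ∑ i ∈ Finset.Icc 1 S, (q (i - 1) + q (i + 1)) / q i =
      ∑ i ∈ Finset.range S, (q i / q (i + 1) + q (i + 1) / q i) := by
  have hshift : ∑ i ∈ Finset.range S, q (i + 2) / q (i + 1) =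
      ∑ i ∈ Finset.range S, q (i + 1) / q i := by
    have := (Finset.sum_range_succ' (fun i => q (i + 1) / q i) S).symm.trans
      (Finset.sum_range_succ _ S)
    rw [h0, h1] at this
    exact add_right_cancel this
  rw [← Finset.Ico_add_one_right_eq_Icc, Finset.sum_Ico_eq_sum_range, Nat.add_sub_cancel,
    Finset.sum_add_distrib, ← hshift, ← Finset.sum_add_distrib]
  refine Finset.sum_congr rfl fun i _ => ?_
  rw [add_comm 1 i, Nat.add_sub_cancel, add_div]

namespace SaturatedFarey

theorem modInv_le (a q : ℕ) : modInv a q ≤ q := by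
  unfold modInv
  split_ifs with hq
  · exact Nat.zero_le q
  · have : NeZero q := ⟨by omega⟩
    exact (ZMod.val_lt _).le

theorem modInv_eq_mod {a b q : ℕ} {k : ℤ} (hq : 2 ≤ q) (h : (a * b : ℤ) = 1 + k * q) :
    modInv a q = b % q := by
  have hab : (a : ZMod q) * b = 1 := by
    have := congrArg (Int.cast : ℤ → ZMod q) h
    push_cast at this
    simpa using this
  rw [modInv, if_neg (by omega), ZMod.inv_eq_of_mul_eq_one q _ _ hab, ZMod.val_natCast]

theorem height_le (x : ℚ) : height x ≤ 2 * x.den + x.num.toNat := by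
  have := modInv_le x.num.toNat x.den
  unfold height
  omega

theorem height_one : height 1 = 2 := by
  simp [height, modInv]

theorem SF_mono : Monotone SF :=
  fun _ _ hQ _ hz => ⟨hz.1, hz.2.1, hz.2.2.trans hQ⟩

theorem one_mem_SF {Q : ℕ} (hQ : 2 ≤ Q) : (1 : ℚ) ∈ SF Q :=
  ⟨one_pos, le_rfl, height_one ▸ hQ⟩

theorem SF_two : SF 2 = {1} := by
  refine Set.eq_singleton_iff_unique_mem.2 ⟨one_mem_SF le_rfl, fun z ⟨hz0, _, hz⟩ => ?_⟩
  have hnum : 0 < z.num := Rat.num_pos.mpr hz0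
  have hden := z.pos
  unfold height at hz
  have hnum1 : z.num = 1 := by omega
  have hden1 : z.den = 1 := by omega
  rw [← Rat.num_div_den z, hnum1, hden1]
  norm_num

def FareyNeighbors (x y : ℚ) : Prop := y.num * x.den - x.num * y.den = 1

noncomputable def mediant (x y : ℚ) : ℚ :=
  ((x.num + y.num : ℤ) : ℚ) / ((x.den + y.den : ℤ) : ℚ)

namespace FareyNeighbors

variable {x y z : ℚ}

theorem lt (h : FareyNeighbors x y) : x < y := by
  rw [Rat.lt_iff]; unfold FareyNeighbors at h; linarith

theorem isCoprime (h : FareyNeighbors x y) : IsCoprime (x.num + y.num) (x.den + y.den : ℤ) :=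
  ⟨x.den, -x.num, by unfold FareyNeighbors at h; linear_combination h⟩

theorem num_mediant (h : FareyNeighbors x y) : (mediant x y).num = x.num + y.num :=
  Rat.num_div_eq_of_coprime (by have := x.pos; omega) (Int.isCoprime_iff_gcd_eq_one.mp h.isCoprime)

theorem den_mediant (h : FareyNeighbors x y) : (mediant x y).den = x.den + y.den := by
  have : ((mediant x y).den : ℤ) = x.den + y.den := Rat.den_div_eq_of_coprime
    (by have := x.pos; omega) (Int.isCoprime_iff_gcd_eq_one.mp h.isCoprime)
  exact_mod_cast this

theorem mediant_left (h : FareyNeighbors x y) : FareyNeighbors x (mediant x y) := by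
  rw [FareyNeighbors, h.num_mediant, h.den_mediant]
  unfold FareyNeighbors at h
  push_cast
  linear_combination h

theorem mediant_right (h : FareyNeighbors x y) : FareyNeighbors (mediant x y) y := by
  rw [FareyNeighbors, h.num_mediant, h.den_mediant]
  unfold FareyNeighbors at h
  push_cast
  linear_combination h

theorem den_add_den_le (h : FareyNeighbors x y) (hxz : x < z) (hzy : z < y) :
    x.den + y.den ≤ z.den := by
  rw [Rat.lt_iff] at hxz hzy
  unfold FareyNeighbors at h
  have hx := x.pos; have hy := y.pos
  have key : (z.den : ℤ) = x.den * (y.num * z.den - z.num * y.den)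
      + y.den * (z.num * x.den - x.num * z.den) := by
    linear_combination (-(z.den : ℤ)) * h
  have : (x.den + y.den : ℤ) ≤ z.den := by nlinarith
  exact_mod_cast this

theorem height_mediant (h : FareyNeighbors x y) (hx : 0 ≤ x) :
    height (mediant x y) = 2 * x.den + y.den + x.num.toNat + y.num.toNat := by
  have hxn : 0 ≤ x.num := Rat.num_nonneg.mpr hx
  have hyn : 0 ≤ y.num := Rat.num_nonneg.mpr (hx.trans h.lt.le)
  have hinv : modInv (x.num.toNat + y.num.toNat) (x.den + y.den) = x.den := by
    have := x.pos; have := y.pos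
    rw [modInv_eq_mod (b := x.den) (k := x.num) (by omega), Nat.mod_eq_of_lt (by omega)]
    unfold FareyNeighbors at h
    push_cast [Int.toNat_of_nonneg hxn, Int.toNat_of_nonneg hyn]
    linear_combination h
  rw [height, h.num_mediant, h.den_mediant, Int.toNat_add hxn hyn, hinv]
  ring

theorem height_left_lt (h : FareyNeighbors x y) (hx : 0 ≤ x) :
    height x < height (mediant x y) := by
  have := height_le x; have := y.pos
  rw [h.height_mediant hx]
  omega

theorem height_right_lt (h : FareyNeighbors x y) (hx : 0 ≤ x) :
    height y < height (mediant x y) := by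
  have hinv : modInv y.num.toNat y.den ≤ x.den := by
    rcases le_or_gt y.den 1 with hy | hy
    · simp [modInv, hy]
    · have hyn := Rat.num_nonneg.mpr (hx.trans h.lt.le)
      unfold FareyNeighbors at h
      rw [modInv_eq_mod (b := x.den) (k := x.num) hy]
      · exact Nat.mod_le _ _
      · rw [Int.toNat_of_nonneg hyn]
        linear_combination h
  have := x.pos
  rw [h.height_mediant hx, height]
  omega

theorem eq_mediant_or_height_lt {x y z : ℚ} (h : FareyNeighbors x y) (hx : 0 ≤ x) (hxz : x < z)
    (hzy : z < y) : z = mediant x y ∨ height (mediant x y) < height z := by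
  refine or_iff_not_imp_left.2 fun hne : z ≠ mediant x y => ?_
  rcases hne.lt_or_gt with hlt | hgt
  · have hden := h.mediant_left.den_add_den_le hxz hlt
    refine (h.mediant_left.height_right_lt hx).trans_le ?_
    rcases h.mediant_left.eq_mediant_or_height_lt hx hxz hlt with heq | hlt
    · rw [← heq]
    · exact hlt.le
  · have hden := h.mediant_right.den_add_den_le hgt hzy
    have hm : 0 ≤ mediant x y := hx.trans h.mediant_left.lt.le
    refine (h.mediant_right.height_left_lt hm).trans_le ?_
    rcases h.mediant_right.eq_mediant_or_height_lt hm hgt hzy with heq | hlt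
    · rw [← heq]
    · exact hlt.le
-- `hden` shows that the measure drops: `z.den ≥ x.den + y.den` on every Farey interval around `z`
termination_by z.den - x.den - y.den
decreasing_by all_goals (rw [h.den_mediant] at *; have hx0 := x.pos; have hy0 := y.pos; omega)

theorem mediant_mem_SF {Q : ℕ} (h : FareyNeighbors x y) (hx : 0 ≤ x)
    (hy : y ≤ 1) (hQ : height (mediant x y) ≤ Q) : mediant x y ∈ SF Q :=
  ⟨hx.trans_lt h.mediant_left.lt, h.mediant_right.lt.le.trans hy, hQ⟩

end FareyNeighbors

-- Both functions read `p :: l` as a chain whose head `p` stays outside the list.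
noncomputable def insertMediants (Q : ℕ) : ℚ → List ℚ → List ℚ
  | _, [] => []
  | p, x :: l =>
    if height (mediant p x) ≤ Q then mediant p x :: x :: insertMediants Q x l
    else x :: insertMediants Q x l

noncomputable def denRatioSum : ℚ → List ℚ → ℚ
  | _, [] => 0
  | p, x :: l => p.den / x.den + x.den / p.den + denRatioSum x l

variable {Q : ℕ} {p z : ℚ} {l : List ℚ}

theorem mem_insertMediants : z ∈ insertMediants Q p l ↔
    z ∈ l ∨ ∃ x y, [x, y] <:+: p :: l ∧ height (mediant x y) ≤ Q ∧ z = mediant x y := by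
  induction l generalizing p with
  | nil => simp [insertMediants, List.infix_singleton_iff]
  | cons x l ih =>
    rw [insertMediants]
    split_ifs <;> simp [ih, List.infix_cons_iff] <;> grind

theorem isChain_insertMediants (h : (p :: l).IsChain FareyNeighbors) :
    (p :: insertMediants Q p l).IsChain FareyNeighbors := by
  induction l generalizing p with
  | nil => exact List.isChain_singleton p
  | cons x l ih =>
    rw [List.isChain_cons_cons] at h
    rw [insertMediants]
    split_ifs
    · exact .cons_cons h.1.mediant_left (.cons_cons h.1.mediant_right (ih h.2))
    · exact .cons_cons h.1 (ih h.2)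

theorem denRatioSum_insertMediants (h : (p :: l).IsChain FareyNeighbors) :
    denRatioSum p (insertMediants Q p l) =
      denRatioSum p l + 3 * ((insertMediants Q p l).length - l.length : ℚ) := by
  induction l generalizing p with
  | nil => simp [insertMediants, denRatioSum]
  | cons x l ih =>
    rw [List.isChain_cons_cons] at h
    rw [insertMediants]
    split_ifs
    · have hp : (p.den : ℚ) ≠ 0 := by positivity
      have hx : (x.den : ℚ) ≠ 0 := by positivity
      have hpx : (p.den + x.den : ℚ) ≠ 0 := by positivity
      simp only [denRatioSum, ih h.2, h.1.den_mediant, List.length_cons]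
      push_cast
      field_simp
      ring
    · simp only [denRatioSum, ih h.2, List.length_cons]
      push_cast
      ring

theorem denRatioSum_eq_sum (d : ℕ → ℚ) (h0 : d 0 = p.den)
    (hd : ∀ i (hi : i < l.length), d (i + 1) = l[i].den) :
    denRatioSum p l = ∑ i ∈ Finset.range l.length, (d i / d (i + 1) + d (i + 1) / d i) := by
  induction l generalizing p d with
  | nil => simp [denRatioSum]
  | cons x l ih =>
    have h1 : d 1 = x.den := hd 0 (by simp)
    rw [denRatioSum, ih (fun i => d (i + 1)) h1 (fun i hi => hd (i + 1) (by simpa)),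
      List.length_cons, Finset.sum_range_succ', h0, h1]
    ring

theorem mem_Icc_of_mem_cons_zero (hSF : ∀ z ∈ l, z ∈ SF Q) {w : ℚ} (hw : w ∈ 0 :: l) :
    w ∈ Set.Icc 0 1 := by
  rcases List.mem_cons.mp hw with rfl | hw
  · exact ⟨le_rfl, zero_le_one⟩
  · exact ⟨(hSF w hw).1.le, (hSF w hw).2.1⟩

theorem insertMediants_subset_SF (hl : (0 :: l).IsChain FareyNeighbors)
    (hSF : ∀ z ∈ l, z ∈ SF Q) (hz : z ∈ insertMediants (Q + 1) 0 l) : z ∈ SF (Q + 1) := by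
  rcases mem_insertMediants.mp hz with hz | ⟨x, y, hxy, hm, rfl⟩
  · exact SF_mono Q.le_succ (hSF z hz)
  · exact (List.isChain_pair.mp (hl.infix hxy)).mediant_mem_SF
      (mem_Icc_of_mem_cons_zero hSF (hxy.subset (by simp))).1
      (mem_Icc_of_mem_cons_zero hSF (hxy.subset (by simp))).2 hm

theorem SF_subset_insertMediants (hQ : 2 ≤ Q) (hl : (0 :: l).IsChain FareyNeighbors)
    (hSF : ∀ z, z ∈ l ↔ z ∈ SF Q) (hz : z ∈ SF (Q + 1)) :
    z ∈ insertMediants (Q + 1) 0 l := by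
  by_cases hzQ : z ∈ SF Q
  · exact mem_insertMediants.mpr (.inl ((hSF z).mpr hzQ))
  have hzl : z ∉ l := fun h => hzQ ((hSF z).mp h)
  obtain ⟨x, y, hxy, hxz, hzy⟩ := List.exists_infix_not_and (p := (z ≤ ·)) (not_le.mpr hz.1)
    ((hSF 1).mpr (one_mem_SF hQ)) hz.2.1
  have hzy : z < y := hzy.lt_of_ne <| by
    rintro rfl
    exact hzl ((List.mem_cons.mp (hxy.subset (by simp))).resolve_left hz.1.ne')
  have hn : FareyNeighbors x y := List.isChain_pair.mp (hl.infix hxy)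
  have hx := (mem_Icc_of_mem_cons_zero (fun w => (hSF w).mp) (hxy.subset List.mem_cons_self)).1
  rcases hn.eq_mediant_or_height_lt hx (not_le.mp hxz) hzy with rfl | hlt
  · exact mem_insertMediants.mpr (.inr ⟨x, y, hxy, hz.2.2, rfl⟩)
  -- a mediant of height at most `Q` would already lie in `l`, strictly between consecutive entries
  have hmQ : mediant x y ∈ SF Q := hn.mediant_mem_SF hx
    (mem_Icc_of_mem_cons_zero (fun w => (hSF w).mp) (hxy.subset (by simp))).2
    (by have := hz.2.2; omega)
  have hsorted : (0 :: l).Pairwise (· < ·) := (hl.imp fun _ _ h => h.lt).pairwise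
  rcases hsorted.le_or_le_of_infix hxy (.tail 0 ((hSF _).mpr hmQ)) with h | h
  · exact absurd hn.mediant_left.lt h.not_gt
  · exact absurd hn.mediant_right.lt h.not_gt

theorem exists_fareyChain_SF (hQ : 2 ≤ Q) : ∃ l : List ℚ, (0 :: l).IsChain FareyNeighbors ∧
    (∀ z, z ∈ l ↔ z ∈ SF Q) ∧ denRatioSum 0 l = 3 * l.length - 1 := by
  induction Q, hQ using Nat.le_induction with
  | base => exact ⟨[1], by simp [FareyNeighbors], by simp [SF_two], by norm_num [denRatioSum]⟩
  | succ Q hQ ih =>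
    obtain ⟨l, hl, hSF, hsum⟩ := ih
    refine ⟨insertMediants (Q + 1) 0 l, isChain_insertMediants hl,
      fun z => ⟨insertMediants_subset_SF hl (fun w => (hSF w).mp),
        SF_subset_insertMediants hQ hl hSF⟩, ?_⟩
    rw [denRatioSum_insertMediants hl, hsum]
    ring

end SaturatedFarey

open SaturatedFarey

theorem index_sum_identity_general (Q S : ℕ) (hQ : 3 ≤ Q)
    (f : Fin S → ℚ) (hmono : StrictMono f) (hrange : Set.range f = SF Q)
    (qe : ℕ → ℚ) (hq0 : qe 0 = 1)
    (hq : ∀ i : Fin S, qe (i.1 + 1) = ((f i).den : ℚ))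
    (hqS : qe (S + 1) = qe 1) :
    ∑ i ∈ Finset.Icc 1 S, (qe (i - 1) + qe (i + 1)) / qe i = 3 * S - 1 := by
  obtain ⟨l, hl, hSF, hsum⟩ := exists_fareyChain_SF (by omega : 2 ≤ Q)
  have hfl : List.ofFn f = l :=
    (List.pairwise_ofFn.mpr fun _ _ h => hmono h).eq_of_mem_iff
      (hl.imp fun _ _ h => h.lt).pairwise.of_cons (by simp [List.mem_ofFn', hrange, hSF])
  obtain ⟨n, rfl⟩ : ∃ n, S = n + 1 := Nat.exists_eq_add_one.mpr <| Nat.pos_of_ne_zero <| by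
    rintro rfl
    simpa [← hrange] using one_mem_SF (by omega : 2 ≤ Q)
  have hlast : f (Fin.last n) = 1 := by
    obtain ⟨j, hj⟩ : (1 : ℚ) ∈ Set.range f := hrange ▸ one_mem_SF (by omega)
    exact le_antisymm (hrange ▸ Set.mem_range_self (Fin.last n)).2.1
      (hj ▸ hmono.monotone (Fin.le_last j))
  have hden := denRatioSum_eq_sum (p := 0) (l := List.ofFn f) qe (by simp [hq0])
    fun i hi => by rw [List.getElem_ofFn]; exact hq ⟨i, by simpa using hi⟩
  rw [List.length_ofFn] at hden
  rw [Finset.sum_Icc_add_div_eq_sum_range qe _ (by simpa [hlast, hq0] using hq (Fin.last n)) hqS,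
    ← hden, hfl, hsum, ← hfl, List.length_ofFn]

/-- Proposition 3: For `Q ≥ 3`, if `γ₁ < ⋯ < γ_S` enumerates
`𝔖𝔉_Q` (via a strictly monotone `f : Fin S → ℚ` with range `𝔖𝔉_Q`), and `qe`
records the denominators with the conventions `qe 0 = 1` (for `0/1`) and
`qe (S+1) = qe 1`, then `∑_{i=1}^{S} (q_{i−1} + q_{i+1})/q_i = 3S − 1`. -/
theorem index_sum_identity (Q S : ℕ) (hQ : 3 ≤ Q) (hS : 0 < S)
    (f : Fin S → ℚ) (hmono : StrictMono f) (hrange : Set.range f = SF Q)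
    (qe : ℕ → ℚ) (hq0 : qe 0 = 1)
    (hq : ∀ i : Fin S, qe (i.1 + 1) = ((f i).den : ℚ))
    (hqS : qe (S + 1) = qe 1) :
    ∑ i ∈ Finset.Icc 1 S, (qe (i - 1) + qe (i + 1)) / qe i = 3 * S - 1 :=
  index_sum_identity_general Q S hQ f hmono hrange qe hq0 hq hqS
end
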